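/- arXiv:1907.08203 — 2 statements merged into one kernel-verified Lean document; each statement's English description precedes it below -/
import Mathlib

section
/- (FKF Lemma) Let (X, τ₁, …, τₙ) be a saturated n-topological space. Then for all 1 ≤ x, y, z ≤ n with y ≤ max(x, z), and every subset A ⊆ X, f_x(k_y(f_z A)) = f_x(f_z A). -/
open Set

noncomputable section

/-- The closure operator of the topology `t`, as an element of the monoid
`Function.End (Set X)` of self-maps of the power set of `X` under composition. -/
def clOp {X : Type*} (t : TopologicalSpace X) : Function.End (Set X) := fun A => @closure X t A

/-- The interior operator of the topology `t`. -/
def intOp {X : Type*} (t : TopologicalSpace X) : Function.End (Set X) := fun A => @interior X t A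

/-- The frontier (topological boundary) operator of the topology `t`. -/
def frOp {X : Type*} (t : TopologicalSpace X) : Function.End (Set X) := fun A => @frontier X t A

/-- The set-complement operator. -/
def complOp {X : Type*} : Function.End (Set X) := fun A => Aᶜ

/-- An `n`-topological space: the topologies `τ 0 ⊇ τ 1 ⊇ ⋯ ⊇ τ (n-1)` are linearly
ordered by inclusion, with `τ 0` the finest: every `τ j`-open set is `τ i`-open
whenever `i ≤ j`. -/
def OrderedTop {X : Type*} {n : ℕ} (τ : Fin n → TopologicalSpace X) : Prop :=
  ∀ i j : Fin n, i ≤ j → ∀ U : Set X, (τ j).IsOpen U → (τ i).IsOpen U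

/-- Saturation: every nonempty `τ x`-open set has nonempty `τ y`-interior. -/
def SaturatedTop {X : Type*} {n : ℕ} (τ : Fin n → TopologicalSpace X) : Prop :=
  ∀ x y : Fin n, ∀ U : Set X, (τ x).IsOpen U → U.Nonempty → (@interior X (τ y) U).Nonempty

/-- `KFₙ⁰`: the submonoid of `Function.End (Set X)` generated by the closure,
interior and frontier operators of the topologies `τ j`. -/
def KF0 {X : Type*} {n : ℕ} (τ : Fin n → TopologicalSpace X) : Submonoid (Function.End (Set X)) :=
  Submonoid.closure (⋃ j : Fin n, {clOp (τ j), intOp (τ j), frOp (τ j)})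

/-- `KFₙ`: the submonoid of `Function.End (Set X)` generated by the closure and
frontier operators of the topologies `τ j` together with the complement operator. -/
def KF {X : Type*} {n : ℕ} (τ : Fin n → TopologicalSpace X) : Submonoid (Function.End (Set X)) :=
  Submonoid.closure ((⋃ j : Fin n, {clOp (τ j), frOp (τ j)}) ∪ {complOp})

/-- `p(n) = (5/24)n⁴ + (37/12)n³ + (79/24)n² + (101/12)n + 2`. -/
def pQ (n : ℕ) : ℚ :=
  5/24*(n:ℚ)^4 + 37/12*(n:ℚ)^3 + 79/24*(n:ℚ)^2 + 101/12*(n:ℚ) + 2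

/-- A saturated pair of topologies: every nonempty set open in either topology has
nonempty interior with respect to both. -/
def Saturated2 {X : Type*} (t1 t2 : TopologicalSpace X) : Prop :=
  ∀ U : Set X, (t1.IsOpen U ∨ t2.IsOpen U) → U.Nonempty →
    (@interior X t1 U).Nonempty ∧ (@interior X t2 U).Nonempty

/-- `KF₂⁰`: the submonoid generated by `{k₁, i₁, f₁, k₂, i₂, f₂}`. -/
def KF20 {X : Type*} (t1 t2 : TopologicalSpace X) : Submonoid (Function.End (Set X)) :=
  Submonoid.closure {clOp t1, intOp t1, frOp t1, clOp t2, intOp t2, frOp t2}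

/-- `KF₂`: the submonoid generated by `{k₁, f₁, k₂, f₂, c}`. -/
def KF2 {X : Type*} (t1 t2 : TopologicalSpace X) : Submonoid (Function.End (Set X)) :=
  Submonoid.closure {clOp t1, frOp t1, clOp t2, frOp t2, complOp}

/-!
Write `S = f_z A`, a `τ_z`-closed set. If `y ≤ z`, then `S` is also `τ_y`-closed and
`k_y S = S`. If `y ≤ x`, then `τ_y` is finer than `τ_x`, so `k_x (k_y S) = k_x S`, and it
remains to see that the `τ_x`-interior of `k_y S` lies in `S`. Otherwise
`i_x (k_y S) \ S` is a nonempty `τ_{min(x,z)}`-open set, which by saturation has nonempty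
`τ_y`-interior: a nonempty `τ_y`-open subset of `k_y S` missing `S`, which is impossible.
-/

open Topology

local notation "interior[" t "]" => @interior _ t
local notation "frontier[" t "]" => @frontier _ t

theorem OrderedTop.monotone {X : Type*} {n : ℕ} {τ : Fin n → TopologicalSpace X}
    (h : OrderedTop τ) : Monotone τ :=
  fun i j hij U => h i j hij U

section TwoTopologies

variable {X : Type*} {t₁ t₂ : TopologicalSpace X} {S : Set X}

theorem closure_closure_of_le (h : t₁ ≤ t₂) : closure[t₂] (closure[t₁] S) = closure[t₂] S :=
  (@closure_minimal X t₂ _ _ (closure.mono h) (@isClosed_closure X t₂ _)).antisymm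
    (@closure_mono X t₂ _ _ (@subset_closure X t₁ S))

theorem interior_closure_subset_of_saturated {t₀ : TopologicalSpace X} (h₀₂ : t₀ ≤ t₂)
    (hS : IsClosed[t₀] S)
    (hsat : ∀ U, IsOpen[t₀] U → U.Nonempty → (interior[t₁] U).Nonempty) :
    interior[t₂] (closure[t₁] S) ⊆ S := by
  intro p hp
  by_contra hpS
  set W := interior[t₂] (closure[t₁] S) \ S
  have hW : IsOpen[t₀] W := (@isOpen_interior X t₂ _).mono h₀₂ |>.sdiff hS
  obtain ⟨v, hv⟩ := hsat W hW ⟨p, hp, hpS⟩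
  have hvS : v ∈ closure[t₁] S :=
    @interior_subset X t₂ _ _ (@interior_subset X t₁ W v hv).1
  have hdisj : Disjoint (interior[t₁] W) (closure[t₁] S) :=
    @Disjoint.closure_right X t₁ _ _ (disjoint_sdiff_left.mono_left (@interior_subset X t₁ W))
      (@isOpen_interior X t₁ W)
  exact Set.disjoint_left.mp hdisj hv hvS

theorem frontier_closure_eq_of_le (h : t₁ ≤ t₂)
    (hint : interior[t₂] (closure[t₁] S) ⊆ S) :
    frontier[t₂] (closure[t₁] S) = frontier[t₂] S := by
  have hint_eq : interior[t₂] (closure[t₁] S) = interior[t₂] S :=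
    (@interior_maximal X t₂ _ _ hint (@isOpen_interior X t₂ _)).antisymm
      (@interior_mono X t₂ _ _ (@subset_closure X t₁ S))
  simp only [frontier, closure_closure_of_le h, hint_eq]

end TwoTopologies

/-- FKF Lemma: in a saturated `n`-topological space, if
`y ≤ max(x, z)` then `fₓ(k_y(f_z A)) = fₓ(f_z A)` for all `A ⊆ X`. -/
theorem stmt_9 {X : Type*} {n : ℕ} (τ : Fin n → TopologicalSpace X)
    (hord : OrderedTop τ) (hsat : SaturatedTop τ) (x y z : Fin n)
    (hy : y ≤ max x z) (A : Set X) :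
    @frontier X (τ x) (@closure X (τ y) (@frontier X (τ z) A)) =
      @frontier X (τ x) (@frontier X (τ z) A) := by
  have hmono := hord.monotone
  have hS : IsClosed[τ z] (frontier[τ z] A) := @isClosed_frontier X (τ z) A
  rcases le_max_iff.mp hy with hyx | hyz
  · exact frontier_closure_eq_of_le (hmono hyx) <|
      interior_closure_subset_of_saturated (hmono (min_le_left x z))
        (hS.mono (hmono (min_le_right x z))) (hsat (min x z) y)
  · rw [@IsClosed.closure_eq X (τ y) _ (hS.mono (hmono hyz))]
end
end

section
/- Let (X, τ₁, τ₂) be a saturated 2-topological space (so τ₁ ⊇ τ₂). Then for every subset A ⊆ X: f₁(f₁ A) ⊆ f₁(k₂(f₁ A)); f₁(k₂(f₁ A)) ⊆ f₁(f₂ A); f₁(k₂(i₂(k₂ A))) ⊆ f₁(k₂ A); and f₁(i₂(k₂(i₂ A))) ⊆ f₁(i₂ A). -/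
open Set

noncomputable section

/-!
Saturation says that every nonempty `t₁`-open set contains a nonempty `t₂`-open set, so a
`t₁`-open set with empty `t₂`-interior is empty. Applied to suitable differences this gives
`i₁ k₂ S ⊆ k₁ S` and `i₁ S ⊆ k₂ i₂ S`; hence `i₁ k₂ = i₁ k₁` and, writing `f = k ∩ k ∘ c`,
`i₁ f₂ = i₁ f₁`. As `f₁ B = k₁ B \ i₁ B`, each inclusion `f₁ B ⊆ f₁ C` reduces to
`k₁ B ⊆ k₁ C` and `i₁ C ⊆ i₁ B`, which follow from these identities.
-/

section

open Topology

variable {X : Type*} {t₁ t₂ : TopologicalSpace X}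

local notation "interior[" t "]" => @interior _ t
local notation "frontier[" t "]" => @frontier _ t

theorem interior_subset_interior_of_le (h : t₁ ≤ t₂) (s : Set X) :
    interior[t₂] s ⊆ interior[t₁] s :=
  @interior_maximal X t₁ _ _ interior_subset (isOpen_interior.mono h)

theorem frontier_subset_frontier_of_le (h : t₁ ≤ t₂) (s : Set X) :
    frontier[t₁] s ⊆ frontier[t₂] s :=
  sdiff_subset_sdiff (closure.mono h) (interior_subset_interior_of_le h s)

namespace Saturated2

theorem eq_empty_of_interior_eq_empty (hsat : Saturated2 t₁ t₂) {U : Set X}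
    (hU : IsOpen[t₁] U) (h : interior[t₂] U = ∅) : U = ∅ := by
  by_contra hne
  exact (hsat U (Or.inl hU) (nonempty_iff_ne_empty.2 hne)).2.ne_empty h

theorem interior_closure_subset_closure (hsat : Saturated2 t₁ t₂) (S : Set X) :
    interior[t₁] (closure[t₂] S) ⊆ closure[t₁] S := by
  set U := interior[t₁] (closure[t₂] S) \ closure[t₁] S
  refine sdiff_eq_empty.1 (hsat.eq_empty_of_interior_eq_empty
    (@IsOpen.sdiff X _ _ t₁ (@isOpen_interior X t₁ _) (@isClosed_closure X t₁ _))
    (subset_empty_iff.1 fun x hx => ?_))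
  have hU : U ⊆ closure[t₂] S := sdiff_subset.trans (@interior_subset X t₁ _)
  have hUc : U ⊆ Sᶜ :=
    (sdiff_subset_compl _ _).trans (compl_subset_compl.2 (@subset_closure X t₁ _))
  have hx' : x ∈ (closure[t₂] S)ᶜ := by simpa only [interior_compl] using interior_mono hUc hx
  exact hx' (hU (interior_subset hx))

theorem interior_subset_closure_interior (hsat : Saturated2 t₁ t₂) (h : t₁ ≤ t₂) (S : Set X) :
    interior[t₁] S ⊆ closure[t₂] (interior[t₂] S) := by
  set U := interior[t₁] S \ closure[t₂] (interior[t₂] S)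
  refine sdiff_eq_empty.1 (hsat.eq_empty_of_interior_eq_empty
    (@IsOpen.sdiff X _ _ t₁ (@isOpen_interior X t₁ _) (isClosed_closure.mono h))
    (subset_empty_iff.1 fun x hx => ?_))
  have hU : interior[t₂] U ⊆ closure[t₂] (interior[t₂] S) :=
    (interior_mono (sdiff_subset.trans (@interior_subset X t₁ _))).trans subset_closure
  exact (interior_subset hx).2 (hU hx)

theorem interior_closure_eq (hsat : Saturated2 t₁ t₂) (h : t₁ ≤ t₂) (S : Set X) :
    interior[t₁] (closure[t₂] S) = interior[t₁] (closure[t₁] S) :=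
  (@interior_maximal X t₁ _ _ (hsat.interior_closure_subset_closure S)
    (@isOpen_interior X t₁ _)).antisymm (@interior_mono X t₁ _ _ (closure.mono h))

theorem interior_frontier_eq (hsat : Saturated2 t₁ t₂) (h : t₁ ≤ t₂) (A : Set X) :
    interior[t₁] (frontier[t₂] A) = interior[t₁] (frontier[t₁] A) := by
  simp only [frontier_eq_closure_inter_closure, interior_inter, hsat.interior_closure_eq h]

theorem frontier_subset_frontier_closure (hsat : Saturated2 t₁ t₂) {B : Set X}
    (hB : IsClosed[t₁] B) : frontier[t₁] B ⊆ frontier[t₁] (closure[t₂] B) :=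
  sdiff_subset_sdiff (@closure_mono X t₁ _ _ subset_closure)
    (@interior_maximal X t₁ _ _
      ((hsat.interior_closure_subset_closure B).trans (@IsClosed.closure_eq X t₁ _ hB).subset)
      (@isOpen_interior X t₁ _))

theorem frontier_closure_frontier_subset_frontier_frontier (hsat : Saturated2 t₁ t₂)
    (h : t₁ ≤ t₂) (A : Set X) :
    frontier[t₁] (closure[t₂] (frontier[t₁] A)) ⊆ frontier[t₁] (frontier[t₂] A) :=
  sdiff_subset_sdiff
    (@closure_mono X t₁ _ _
      (closure_minimal (frontier_subset_frontier_of_le h A) isClosed_frontier))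
    ((hsat.interior_frontier_eq h A).trans_subset (@interior_mono X t₁ _ _ subset_closure))

theorem frontier_closure_interior_subset_frontier (hsat : Saturated2 t₁ t₂) (h : t₁ ≤ t₂)
    {C : Set X} (hC : IsClosed[t₂] C) :
    frontier[t₁] (closure[t₂] (interior[t₂] C)) ⊆ frontier[t₁] C :=
  sdiff_subset_sdiff (@closure_mono X t₁ _ _ (closure_minimal interior_subset hC))
    (@interior_maximal X t₁ _ _ (hsat.interior_subset_closure_interior h C)
      (@isOpen_interior X t₁ _))

theorem frontier_interior_closure_subset_frontier (hsat : Saturated2 t₁ t₂) (h : t₁ ≤ t₂)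
    {O : Set X} (hO : IsOpen[t₂] O) :
    frontier[t₁] (interior[t₂] (closure[t₂] O)) ⊆ frontier[t₁] O :=
  sdiff_subset_sdiff
    (@closure_minimal X t₁ _ _ ((interior_subset_interior_of_le h _).trans
      (hsat.interior_closure_subset_closure O)) (@isClosed_closure X t₁ _))
    (@interior_mono X t₁ _ _ (interior_maximal subset_closure hO))

end Saturated2

end

/-- in a saturated 2-topological space (τ₁ ⊇ τ₂), for every `A ⊆ X`:
`f₁(f₁ A) ⊆ f₁(k₂(f₁ A))`, `f₁(k₂(f₁ A)) ⊆ f₁(f₂ A)`,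
`f₁(k₂(i₂(k₂ A))) ⊆ f₁(k₂ A)`, and `f₁(i₂(k₂(i₂ A))) ⊆ f₁(i₂ A)`. -/
theorem stmt_17 {X : Type*} (t1 t2 : TopologicalSpace X)
    (hord : ∀ U : Set X, t2.IsOpen U → t1.IsOpen U) (hsat : Saturated2 t1 t2)
    (A : Set X) :
    @frontier X t1 (@frontier X t1 A) ⊆ @frontier X t1 (@closure X t2 (@frontier X t1 A)) ∧
      @frontier X t1 (@closure X t2 (@frontier X t1 A)) ⊆ @frontier X t1 (@frontier X t2 A) ∧
      @frontier X t1 (@closure X t2 (@interior X t2 (@closure X t2 A))) ⊆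
        @frontier X t1 (@closure X t2 A) ∧
      @frontier X t1 (@interior X t2 (@closure X t2 (@interior X t2 A))) ⊆
        @frontier X t1 (@interior X t2 A) := by
  have h : t1 ≤ t2 := isOpen_implies_isOpen_iff.1 hord
  exact ⟨hsat.frontier_subset_frontier_closure (@isClosed_frontier X t1 A),
    hsat.frontier_closure_frontier_subset_frontier_frontier h A,
    hsat.frontier_closure_interior_subset_frontier h isClosed_closure,
    hsat.frontier_interior_closure_subset_frontier h isOpen_interior⟩
end
end
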